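/- Let g : ℝ³ → ℝ be defined by g(a,b,c) = max{ (8/9)(a² − 2√2·ac + 2c²), (1/9)(√2·a + √6·b + 4c)², (1/9)(√2·a − √6·b + 4c)², (2/3)(3a² + 2√3·ab + b²), (2/3)(3a² − 2√3·ab + b²), (8/3)b² }. Then (3/8)·(1/(4π))·∫₀^{2π} ∫₀^{π} g(cos θ sin φ, sin θ sin φ, cos φ) · sin φ dφ dθ = (1/3)·(1 + (3 + √3)/π). (This is the mean square width of a regular tetrahedron with unit edge length.) -/

import Mathlib

/-!
The width in direction `u` is `max_i ⟨u, v_i⟩ - min_i ⟨u, v_i⟩`, and the six terms of `gTetra`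
are the squared pairwise differences of the four heights `⟨u, v_i⟩`, so `gTetra` is the squared
width. In spherical coordinates the base vertices sit at azimuths `0` and `±2π/3`, so the inner
integral is invariant under `θ ↦ θ + 2π/3` and `θ ↦ -θ`, and the outer integral is six times the
one over `[0, π/3]`. For such `θ` the extreme vertices along a meridian change only at the polar
angles `φ₁ ≤ π/2 ≤ φ₂` with `cot φ₁ = cos θ / √2` and `cot φ₂ = -cos (π/3 - θ) / √2`; on each of the
three arcs the width is a fixed linear form in `sin φ, cos φ`, whose square times `sin φ` has an
elementary primitive. What remains is an algebraic function of `cos θ` and `cos (π/3 - θ)`, again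
with an explicit primitive.
-/

open Real

/-- Squared-width function of the regular tetrahedron with vertices `(0,0,1)`,
`(2√2/3, 0, −1/3)`, `(−√2/3, √(2/3), −1/3)`, `(−√2/3, −√(2/3), −1/3)` in direction
`(a,b,c)` on the unit sphere. -/
noncomputable def gTetra (a b c : ℝ) : ℝ :=
  max (max (max ((8/9) * (a ^ 2 - 2 * Real.sqrt 2 * a * c + 2 * c ^ 2))
        ((1/9) * (Real.sqrt 2 * a + Real.sqrt 6 * b + 4 * c) ^ 2))
      (max ((1/9) * (Real.sqrt 2 * a - Real.sqrt 6 * b + 4 * c) ^ 2)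
        ((2/3) * (3 * a ^ 2 + 2 * Real.sqrt 3 * a * b + b ^ 2))))
    (max ((2/3) * (3 * a ^ 2 - 2 * Real.sqrt 3 * a * b + b ^ 2)) ((8/3) * b ^ 2))

section Spread

variable {α : Type*}

def spread4 [LinearOrder α] [Sub α] (w x y z : α) : α :=
  max (max w x) (max y z) - min (min w x) (min y z)

lemma spread4_rotate [LinearOrder α] [Sub α] (w x y z : α) : spread4 w z x y = spread4 w x y z := by
  simp only [spread4, max_comm, max_left_comm, min_comm, min_left_comm]

lemma spread4_swap [LinearOrder α] [Sub α] (w x y z : α) : spread4 w x z y = spread4 w x y z := by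
  simp only [spread4, max_comm, min_comm]

lemma spread4_of_le [LinearOrder α] [Sub α] {w x y z : α} (hyx : y ≤ x) (hzy : z ≤ y) :
    spread4 w x y z = max w x - min w z := by
  rw [spread4, max_eq_left hzy, min_eq_right hzy, max_eq_left (hyx.trans (le_max_right w x)),
    min_assoc, min_eq_right (hzy.trans hyx)]

lemma max_sq_sub_eq_spread4_sq [CommRing α] [LinearOrder α] [IsStrictOrderedRing α]
    (w x y z : α) :
    max (max (max ((w - x) ^ 2) ((w - z) ^ 2)) (max ((w - y) ^ 2) ((x - z) ^ 2)))
      (max ((x - y) ^ 2) ((y - z) ^ 2)) = spread4 w x y z ^ 2 := by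
  rw [spread4]
  set M := max (max w x) (max y z)
  set m := min (min w x) (min y z)
  apply le_antisymm
  · have hM : w ≤ M ∧ x ≤ M ∧ y ≤ M ∧ z ≤ M := by simp [M]
    have hm : m ≤ w ∧ m ≤ x ∧ m ≤ y ∧ m ≤ z := by simp [m]
    have bound : ∀ p q : α, p ≤ M → m ≤ p → q ≤ M → m ≤ q → (p - q) ^ 2 ≤ (M - m) ^ 2 :=
      fun p q hp hp' hq hq' => sq_le_sq' (by linarith) (by linarith)
    simp only [max_le_iff]
    refine ⟨⟨⟨?_, ?_⟩, ?_, ?_⟩, ?_, ?_⟩ <;> apply bound <;> tauto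
  · have hM : M = w ∨ M = x ∨ M = y ∨ M = z := by
      simp only [M, max_def]; split_ifs <;> simp
    have hm : m = w ∨ m = x ∨ m = y ∨ m = z := by
      simp only [m, min_def]; split_ifs <;> simp
    rcases hM with h | h | h | h <;> rcases hm with h' | h' | h' | h' <;> rw [h, h'] <;>
      first
      | (simp [sq_nonneg]; done)
      | (rw [← neg_sub, neg_sq]; simp)

end Spread

lemma gTetra_eq_spread4_sq (a b c : ℝ) :
    gTetra a b c = spread4 c ((2 * √2 * a - c) / 3) ((-√2 * a + √6 * b - c) / 3)
      ((-√2 * a - √6 * b - c) / 3) ^ 2 := by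
  have h2 : √2 ^ 2 = 2 := sq_sqrt (by norm_num)
  have h6 : √6 ^ 2 = 6 := sq_sqrt (by norm_num)
  have h26 : √2 * √6 = 2 * √3 := by
    rw [← sqrt_mul (by norm_num), show (2 : ℝ) * 6 = 2 ^ 2 * 3 by norm_num, sqrt_mul (by norm_num),
      sqrt_sq (by norm_num)]
  rw [← max_sq_sub_eq_spread4_sq, gTetra]
  refine congrArg₂ max (congrArg₂ max (congrArg₂ max ?_ ?_) (congrArg₂ max ?_ ?_))
    (congrArg₂ max ?_ ?_)
  · linear_combination (-4 / 9 * a ^ 2) * h2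
  · ring
  · ring
  · linear_combination (-a ^ 2) * h2 - b ^ 2 / 9 * h6 - 2 / 3 * a * b * h26
  · linear_combination (-a ^ 2) * h2 - b ^ 2 / 9 * h6 + 2 / 3 * a * b * h26
  · linear_combination (-4 / 9 * b ^ 2) * h6

-- `baseHeight (θ - ψ) φ` is the height of the base vertex at azimuth `ψ` in direction `(θ, φ)`.
noncomputable def baseHeight (t φ : ℝ) : ℝ := 2 * √2 / 3 * cos t * sin φ - cos φ / 3

noncomputable def tetraWidth (θ φ : ℝ) : ℝ :=
  spread4 (cos φ) (baseHeight θ φ) (baseHeight (θ - 2 * π / 3) φ) (baseHeight (θ + 2 * π / 3) φ)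

@[fun_prop]
lemma Continuous.tetraWidth {α : Type*} [TopologicalSpace α] {f g : α → ℝ} (hf : Continuous f)
    (hg : Continuous g) : Continuous fun x => tetraWidth (f x) (g x) := by
  unfold _root_.tetraWidth spread4 baseHeight; fun_prop

lemma gTetra_sphere_eq (θ φ : ℝ) :
    gTetra (cos θ * sin φ) (sin θ * sin φ) (cos φ) = tetraWidth θ φ ^ 2 := by
  have h23 : √2 * √3 = √6 := by rw [← sqrt_mul (by norm_num)]; norm_num
  have hcos : cos (2 * π / 3) = -1 / 2 := by
    rw [show 2 * π / 3 = π - π / 3 by ring, cos_pi_sub, cos_pi_div_three]; norm_num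
  have hsin : sin (2 * π / 3) = √3 / 2 := by
    rw [show 2 * π / 3 = π - π / 3 by ring, sin_pi_sub, sin_pi_div_three]
  rw [gTetra_eq_spread4_sq, tetraWidth, baseHeight, baseHeight, baseHeight, cos_sub, cos_add,
    hcos, hsin, ← h23]
  congr 2 <;> ring

lemma baseHeight_add_two_pi (t φ : ℝ) : baseHeight (t + 2 * π) φ = baseHeight t φ := by
  rw [baseHeight, baseHeight, cos_add_two_pi]

lemma baseHeight_neg (t φ : ℝ) : baseHeight (-t) φ = baseHeight t φ := by
  rw [baseHeight, baseHeight, cos_neg]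

lemma tetraWidth_add_two_pi_div_three (θ φ : ℝ) :
    tetraWidth (θ + 2 * π / 3) φ = tetraWidth θ φ := by
  rw [tetraWidth, tetraWidth, add_sub_cancel_right,
    show θ + 2 * π / 3 + 2 * π / 3 = θ - 2 * π / 3 + 2 * π by ring, baseHeight_add_two_pi,
    spread4_rotate]

lemma tetraWidth_neg (θ φ : ℝ) : tetraWidth (-θ) φ = tetraWidth θ φ := by
  rw [tetraWidth, tetraWidth, ← spread4_swap]
  congr 1 <;> rw [← baseHeight_neg] <;> congr 1 <;> ring

lemma max_sub_min_eq_max_zero_add_max_zero (a b d : ℝ) :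
    max a b - min a d = max 0 (b - a) + max 0 (a - d) := by
  rw [max_def, min_def, max_def, max_def]
  split_ifs <;> linarith

lemma tetraWidth_of_mem_sector {θ φ : ℝ} (hθ : θ ∈ Set.Icc 0 (π / 3)) (hφ : 0 ≤ sin φ) :
    tetraWidth θ φ = 2 * √2 / 3 *
      (max 0 (cos θ * sin φ - √2 * cos φ) + max 0 (cos (π / 3 - θ) * sin φ + √2 * cos φ)) := by
  obtain ⟨h0, h1⟩ := hθ
  have mono : ∀ {s t : ℝ}, cos s ≤ cos t → baseHeight s φ ≤ baseHeight t φ := fun h => by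
    unfold baseHeight; gcongr
  have h21 : cos (θ - 2 * π / 3) ≤ cos θ := by
    rw [← cos_neg (θ - _), neg_sub, ← cos_abs θ, abs_of_nonneg h0]
    apply cos_le_cos_of_nonneg_of_le_pi h0 <;> linarith [pi_pos]
  have h32 : cos (θ + 2 * π / 3) ≤ cos (θ - 2 * π / 3) := by
    rw [← cos_neg (θ - _), neg_sub]
    apply cos_le_cos_of_nonneg_of_le_pi <;> linarith [pi_pos]
  have h3 : cos (θ + 2 * π / 3) = -cos (π / 3 - θ) := by
    rw [show θ + 2 * π / 3 = π - (π / 3 - θ) by ring, cos_pi_sub]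
  have h2 : √2 ^ 2 = 2 := sq_sqrt (by norm_num)
  rw [tetraWidth, spread4_of_le (mono h21) (mono h32), max_sub_min_eq_max_zero_add_max_zero,
    baseHeight, baseHeight, h3, mul_add, mul_max_of_nonneg _ _ (by positivity),
    mul_max_of_nonneg _ _ (by positivity), mul_zero]
  congr 2
  · linear_combination (2 / 3 * cos φ) * h2
  · linear_combination (-2 / 3 * cos φ) * h2

lemma exists_angle_of_nonneg {p q : ℝ} (hp : 0 ≤ p) (hq : 0 ≤ q) :
    ∃ φ ∈ Set.Icc 0 (π / 2), cos φ * √(p ^ 2 + q ^ 2) = p ∧ sin φ * √(p ^ 2 + q ^ 2) = q := by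
  set z : ℂ := ⟨p, q⟩
  have hz : ‖z‖ = √(p ^ 2 + q ^ 2) := Complex.norm_eq_sqrt_sq_add_sq z
  refine ⟨Complex.arg z, ⟨Complex.arg_nonneg_iff.2 hq,
    Complex.arg_le_pi_div_two_iff.2 (Or.inl hp)⟩, ?_, ?_⟩
  · rw [← hz, mul_comm, Complex.norm_mul_cos_arg]
  · rw [← hz, mul_comm, Complex.norm_mul_sin_arg]

lemma mul_sin_le_mul_cos_of_le_angle {φ r p q x : ℝ} (hr : 0 ≤ r) (hcos : cos φ * r = p)
    (hsin : sin φ * r = q) (hxφ : x ≤ φ) (hφx : φ ≤ x + π) : p * sin x ≤ q * cos x := by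
  have h : q * cos x - p * sin x = r * sin (φ - x) := by rw [sin_sub, ← hcos, ← hsin]; ring
  linarith [mul_nonneg hr (sin_nonneg_of_nonneg_of_le_pi (sub_nonneg.2 hxφ) (by linarith))]

lemma mul_cos_le_mul_sin_of_angle_le {φ r p q x : ℝ} (hr : 0 ≤ r) (hcos : cos φ * r = p)
    (hsin : sin φ * r = q) (hφx : φ ≤ x) (hxφ : x ≤ φ + π) : q * cos x ≤ p * sin x := by
  have h : q * cos x - p * sin x = r * sin (φ - x) := by rw [sin_sub, ← hcos, ← hsin]; ring
  linarith [mul_nonpos_of_nonneg_of_nonpos hr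
    (sin_nonpos_of_nonpos_of_neg_pi_le (sub_nonpos.2 hφx) (by linarith))]

noncomputable def sqSinAntideriv (X Y φ : ℝ) : ℝ :=
  X ^ 2 * (cos φ ^ 3 / 3 - cos φ) + 2 * X * Y / 3 * sin φ ^ 3 - Y ^ 2 / 3 * cos φ ^ 3

lemma integral_sq_mul_sin (X Y a b : ℝ) :
    ∫ φ in a..b, (X * sin φ + Y * cos φ) ^ 2 * sin φ
      = sqSinAntideriv X Y b - sqSinAntideriv X Y a := by
  refine intervalIntegral.integral_eq_sub_of_hasDerivAt (fun x _ => ?_)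
    ((by fun_prop : Continuous _).intervalIntegrable _ _)
  have hc := hasDerivAt_cos x
  have h := ((((hc.pow 3).div_const 3).sub hc).const_mul (X ^ 2)).add
    (((hasDerivAt_sin x).pow 3).const_mul (2 * X * Y / 3)) |>.sub ((hc.pow 3).const_mul (Y ^ 2 / 3))
  refine HasDerivAt.congr_deriv (f := sqSinAntideriv X Y) h ?_
  linear_combination (-X ^ 2 * sin x) * sin_sq_add_cos_sq x

lemma sqSinAntideriv_zero (X Y : ℝ) : sqSinAntideriv X Y 0 = -(2 * X ^ 2 + Y ^ 2) / 3 := by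
  simp only [sqSinAntideriv, cos_zero, sin_zero]; ring

lemma sqSinAntideriv_pi (X Y : ℝ) : sqSinAntideriv X Y π = (2 * X ^ 2 + Y ^ 2) / 3 := by
  simp only [sqSinAntideriv, cos_pi, sin_pi]; ring

lemma sqSinAntideriv_pi_sub (X Y φ : ℝ) :
    sqSinAntideriv X Y (π - φ) = -sqSinAntideriv X (-Y) φ := by
  simp only [sqSinAntideriv, cos_pi_sub, sin_pi_sub]; ring

-- The jump of primitives at a breakpoint where `(m sin + q cos)²` hands over to `((c + m) sin)²`.
lemma sqSinAntideriv_sub_of_angle {φ r c m q : ℝ} (hr : r ≠ 0) (hcos : cos φ * r = c)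
    (hsin : sin φ * r = q) :
    sqSinAntideriv m q φ - sqSinAntideriv (c + m) 0 φ
      = 2 * (c ^ 3 + m * (2 * c ^ 2 + q ^ 2)) / (3 * r) := by
  subst hcos hsin
  rw [eq_div_iff (by simpa using hr), sqSinAntideriv, sqSinAntideriv]
  linear_combination (3 * r) * (-r ^ 2 * cos φ ^ 3 / 3 + 2 / 3 * m * r * (sin φ ^ 2 - cos φ ^ 2))
    * sin_sq_add_cos_sq φ

-- `φ = arccot (c / √2)`
def IsCotAngle (c φ : ℝ) : Prop :=
  φ ∈ Set.Icc 0 (π / 2) ∧ cos φ * √(c ^ 2 + 2) = c ∧ sin φ * √(c ^ 2 + 2) = √2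

lemma exists_isCotAngle {c : ℝ} (hc : 0 ≤ c) : ∃ φ, IsCotAngle c φ := by
  simpa [IsCotAngle, sq_sqrt zero_le_two] using exists_angle_of_nonneg hc (sqrt_nonneg 2)

lemma cos_nonneg_of_mem_sector {θ : ℝ} (hθ : θ ∈ Set.Icc 0 (π / 3)) : 0 ≤ cos θ :=
  cos_nonneg_of_mem_Icc ⟨by linarith [hθ.1, pi_pos], by linarith [hθ.2, pi_pos]⟩

lemma sub_mem_sector {θ : ℝ} (hθ : θ ∈ Set.Icc 0 (π / 3)) : π / 3 - θ ∈ Set.Icc 0 (π / 3) :=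
  ⟨by linarith [hθ.2], by linarith [hθ.1]⟩

lemma tetraWidth_of_mem_north {θ φ₁ x : ℝ} (hθ : θ ∈ Set.Icc 0 (π / 3))
    (hφ₁ : IsCotAngle (cos θ) φ₁) (hx : x ∈ Set.Icc 0 φ₁) :
    tetraWidth θ x = 2 * √2 / 3 * (cos (π / 3 - θ) * sin x + √2 * cos x) := by
  obtain ⟨⟨-, hφ₁⟩, hcos, hsin⟩ := hφ₁
  have hsx : 0 ≤ sin x := sin_nonneg_of_nonneg_of_le_pi hx.1 (by linarith [hx.2, pi_pos])
  have hcx : 0 ≤ cos x := cos_nonneg_of_mem_Icc ⟨by linarith [hx.1, pi_pos], by linarith [hx.2]⟩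
  have hm := cos_nonneg_of_mem_sector (sub_mem_sector hθ)
  have h₁ := mul_sin_le_mul_cos_of_le_angle (sqrt_nonneg _) hcos hsin hx.2
    (by linarith [hx.1, pi_pos])
  rw [tetraWidth_of_mem_sector hθ hsx, max_eq_left (by linarith), max_eq_right (by positivity),
    zero_add]

lemma tetraWidth_of_mem_belt {θ φ₁ ψ x : ℝ} (hθ : θ ∈ Set.Icc 0 (π / 3))
    (hφ₁ : IsCotAngle (cos θ) φ₁) (hψ : IsCotAngle (cos (π / 3 - θ)) ψ)
    (hx : x ∈ Set.Icc φ₁ (π - ψ)) :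
    tetraWidth θ x = 2 * √2 / 3 * ((cos θ + cos (π / 3 - θ)) * sin x + 0 * cos x) := by
  obtain ⟨⟨hφ₁, -⟩, hcos₁, hsin₁⟩ := hφ₁
  obtain ⟨⟨hψ, -⟩, hcosψ, hsinψ⟩ := hψ
  have hsx : 0 ≤ sin x := sin_nonneg_of_nonneg_of_le_pi (by linarith [hx.1]) (by linarith [hx.2])
  have h₁ := mul_cos_le_mul_sin_of_angle_le (sqrt_nonneg _) hcos₁ hsin₁ hx.1 (by linarith [hx.2])
  have h₂ := mul_cos_le_mul_sin_of_angle_le (sqrt_nonneg _) hcosψ hsinψ (x := π - x)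
    (by linarith [hx.2]) (by linarith [hx.1])
  rw [cos_pi_sub, sin_pi_sub] at h₂
  rw [tetraWidth_of_mem_sector hθ hsx, max_eq_right (by linarith), max_eq_right (by linarith)]
  ring

lemma tetraWidth_of_mem_south {θ ψ x : ℝ} (hθ : θ ∈ Set.Icc 0 (π / 3))
    (hψ : IsCotAngle (cos (π / 3 - θ)) ψ) (hx : x ∈ Set.Icc (π - ψ) π) :
    tetraWidth θ x = 2 * √2 / 3 * (cos θ * sin x + -√2 * cos x) := by
  obtain ⟨⟨hψ, hψ'⟩, hcos, hsin⟩ := hψ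
  have hsx : 0 ≤ sin x := sin_nonneg_of_nonneg_of_le_pi (by linarith [hx.1]) hx.2
  have hcx : cos x ≤ 0 :=
    cos_nonpos_of_pi_div_two_le_of_le (by linarith [hx.1]) (by linarith [hx.2, pi_pos])
  have h₁ : 0 ≤ cos θ * sin x - √2 * cos x := by
    have := mul_nonneg (cos_nonneg_of_mem_sector hθ) hsx
    have := mul_nonpos_of_nonneg_of_nonpos (sqrt_nonneg 2) hcx
    linarith
  have h₂ := mul_sin_le_mul_cos_of_le_angle (sqrt_nonneg _) hcos hsin (x := π - x)
    (by linarith [hx.1]) (by linarith [hx.2])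
  rw [cos_pi_sub, sin_pi_sub] at h₂
  rw [tetraWidth_of_mem_sector hθ hsx, max_eq_right h₁, max_eq_left (by linarith)]
  ring

lemma integral_tetraWidth_sq_of_eqOn {θ a b X Y : ℝ} (hab : a ≤ b)
    (h : ∀ x ∈ Set.Icc a b, tetraWidth θ x = 2 * √2 / 3 * (X * sin x + Y * cos x)) :
    ∫ φ in a..b, tetraWidth θ φ ^ 2 * sin φ
      = 8 / 9 * (sqSinAntideriv X Y b - sqSinAntideriv X Y a) := by
  rw [← integral_sq_mul_sin, ← intervalIntegral.integral_const_mul]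
  refine intervalIntegral.integral_congr fun x hx => ?_
  rw [Set.uIcc_of_le hab] at hx
  simp only [h x hx]
  linear_combination (4 / 9 * (X * sin x + Y * cos x) ^ 2 * sin x) * sq_sqrt zero_le_two

lemma sum_sqSinAntideriv_of_isCotAngle {c m φ₁ ψ : ℝ} (hφ₁ : IsCotAngle c φ₁)
    (hψ : IsCotAngle m ψ) :
    (sqSinAntideriv m √2 φ₁ - sqSinAntideriv m √2 0)
      + (sqSinAntideriv (c + m) 0 (π - ψ) - sqSinAntideriv (c + m) 0 φ₁)
      + (sqSinAntideriv c (-√2) π - sqSinAntideriv c (-√2) (π - ψ))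
      = 2 / 3 * (c ^ 2 + m ^ 2 + 2 + (c ^ 3 + 2 * m * (c ^ 2 + 1)) / √(c ^ 2 + 2)
        + (m ^ 3 + 2 * c * (m ^ 2 + 1)) / √(m ^ 2 + 2)) := by
  obtain ⟨-, hcos₁, hsin₁⟩ := hφ₁
  obtain ⟨-, hcosψ, hsinψ⟩ := hψ
  have break₁ := sqSinAntideriv_sub_of_angle (m := m) (sqrt_pos.2 (by positivity)).ne' hcos₁ hsin₁
  have break₂ := sqSinAntideriv_sub_of_angle (m := c) (sqrt_pos.2 (by positivity)).ne' hcosψ hsinψ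
  have h2 : √2 ^ 2 = 2 := sq_sqrt zero_le_two
  rw [h2] at break₁ break₂
  rw [add_comm m c] at break₂
  rw [sqSinAntideriv_pi_sub, sqSinAntideriv_pi_sub, sqSinAntideriv_zero, sqSinAntideriv_pi,
    neg_zero, neg_neg]
  linear_combination break₁ + break₂ + 2 / 3 * h2

noncomputable def edgeTerm (θ : ℝ) : ℝ :=
  (cos θ ^ 3 + 2 * cos (π / 3 - θ) * (cos θ ^ 2 + 1)) / √(cos θ ^ 2 + 2)

lemma integral_tetraWidth_sq_of_mem_sector {θ : ℝ} (hθ : θ ∈ Set.Icc 0 (π / 3)) :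
    ∫ φ in 0..π, tetraWidth θ φ ^ 2 * sin φ
      = 16 / 27 * (cos θ ^ 2 + cos (π / 3 - θ) ^ 2 + 2 + edgeTerm θ + edgeTerm (π / 3 - θ)) := by
  obtain ⟨φ₁, hφ₁⟩ := exists_isCotAngle (cos_nonneg_of_mem_sector hθ)
  obtain ⟨ψ, hψ⟩ := exists_isCotAngle (cos_nonneg_of_mem_sector (sub_mem_sector hθ))
  have hint : ∀ a b,
      IntervalIntegrable (fun φ => tetraWidth θ φ ^ 2 * sin φ) MeasureTheory.volume a b :=
    fun a b => (by fun_prop : Continuous _).intervalIntegrable a b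
  have hφ₁ψ : φ₁ ≤ π - ψ := by linarith [hφ₁.1.2, hψ.1.2]
  rw [← intervalIntegral.integral_add_adjacent_intervals (hint 0 φ₁) (hint φ₁ π),
    ← intervalIntegral.integral_add_adjacent_intervals (hint φ₁ (π - ψ)) (hint (π - ψ) π),
    integral_tetraWidth_sq_of_eqOn hφ₁.1.1 fun x hx => tetraWidth_of_mem_north hθ hφ₁ hx,
    integral_tetraWidth_sq_of_eqOn hφ₁ψ fun x hx => tetraWidth_of_mem_belt hθ hφ₁ hψ hx,
    integral_tetraWidth_sq_of_eqOn (by linarith [hψ.1.1]) fun x hx =>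
      tetraWidth_of_mem_south hθ hψ hx,
    edgeTerm, edgeTerm, sub_sub_cancel]
  linear_combination 8 / 9 * sum_sqSinAntideriv_of_isCotAngle hφ₁ hψ

lemma integral_eq_six_mul_of_periodic_of_even {f : ℝ → ℝ} {p : ℝ} (hf : Continuous f)
    (hper : Function.Periodic f (2 * p)) (heven : Function.Even f) :
    ∫ x in 0..6 * p, f x = 6 * ∫ x in 0..p, f x := by
  have hint : ∀ a b, IntervalIntegrable f MeasureTheory.volume a b :=
    fun a b => hf.intervalIntegrable a b
  have three_periods := hper.intervalIntegral_add_zsmul_eq 3 0 hint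
  have one_period : ∫ x in 0..2 * p, f x = 2 * ∫ x in 0..p, f x := by
    have h := hper.intervalIntegral_add_eq (-p) 0
    have hneg : ∫ x in -p..0, f x = ∫ x in 0..p, f x := by
      simpa [heven _] using (intervalIntegral.integral_comp_neg (a := 0) (b := p) f).symm
    rw [zero_add] at h
    rw [← h, show -p + 2 * p = p by ring,
      ← intervalIntegral.integral_add_adjacent_intervals (hint (-p) 0) (hint 0 p), hneg]
    ring
  simp only [zero_add, zsmul_eq_mul, Int.cast_ofNat] at three_periods
  rw [show 6 * p = 3 * (2 * p) by ring, three_periods, one_period]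
  ring

noncomputable def edgeAntideriv (θ : ℝ) : ℝ := (sin θ - √3 / 2 * cos θ) * √(cos θ ^ 2 + 2)

lemma hasDerivAt_edgeAntideriv (θ : ℝ) : HasDerivAt edgeAntideriv (edgeTerm θ) θ := by
  have hpos : 0 < cos θ ^ 2 + 2 := by positivity
  have hr := (((hasDerivAt_cos θ).pow 2).add_const 2).sqrt hpos.ne'
  have h := ((hasDerivAt_sin θ).sub ((hasDerivAt_cos θ).const_mul (√3 / 2))).mul hr
  have hne : √(cos θ ^ 2 + 2) ≠ 0 := (sqrt_pos.2 hpos).ne'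
  refine h.congr_deriv ?_
  simp only [Pi.pow_apply, Pi.sub_apply, Nat.cast_ofNat]
  rw [edgeTerm, cos_sub, cos_pi_div_three, sin_pi_div_three]
  field_simp
  rw [sq_sqrt hpos.le]
  linear_combination (-2 * cos θ) * sin_sq_add_cos_sq θ

@[fun_prop]
lemma continuous_edgeTerm : Continuous edgeTerm := by
  unfold edgeTerm
  exact Continuous.div (by fun_prop) (by fun_prop) fun θ => by positivity

lemma integral_edgeTerm : ∫ θ in 0..π / 3, edgeTerm θ = 3 / 2 + 3 * √3 / 8 := by
  rw [intervalIntegral.integral_eq_sub_of_hasDerivAt (fun θ _ => hasDerivAt_edgeAntideriv θ)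
    (continuous_edgeTerm.intervalIntegrable _ _)]
  simp only [edgeAntideriv, cos_pi_div_three, sin_pi_div_three, cos_zero, sin_zero]
  rw [show (1 / 2 : ℝ) ^ 2 + 2 = (3 / 2) ^ 2 by norm_num, sqrt_sq (by norm_num), one_pow,
    show (1 : ℝ) + 2 = 3 by norm_num]
  linear_combination (1 / 2 : ℝ) * sq_sqrt (show (0 : ℝ) ≤ 3 by norm_num)

lemma integral_sector_eq :
    ∫ θ in 0..π / 3,
      16 / 27 * (cos θ ^ 2 + cos (π / 3 - θ) ^ 2 + 2 + edgeTerm θ + edgeTerm (π / 3 - θ))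
      = 16 / 27 * (π + 3 + √3) := by
  have reflect : ∀ f : ℝ → ℝ, ∫ θ in 0..π / 3, f (π / 3 - θ) = ∫ θ in 0..π / 3, f θ := fun f => by
    simp [intervalIntegral.integral_comp_sub_left]
  rw [intervalIntegral.integral_const_mul, intervalIntegral.integral_add,
    intervalIntegral.integral_add, intervalIntegral.integral_add, intervalIntegral.integral_add,
    reflect (fun θ => cos θ ^ 2),
    reflect edgeTerm, integral_cos_sq, integral_edgeTerm]
  · simp only [cos_pi_div_three, sin_pi_div_three, cos_zero, sin_zero,
      intervalIntegral.integral_const, smul_eq_mul]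
    ring
  all_goals exact Continuous.intervalIntegrable (by fun_prop) _ _

/-- The mean square width of a regular tetrahedron with unit edge length is
`(1/3)(1 + (3+√3)/π)`. -/
theorem mean_square_width_regular_tetrahedron :
    (3/8) * (1 / (4 * π)) *
      ∫ θ in (0:ℝ)..(2 * π), ∫ φ in (0:ℝ)..π,
        gTetra (Real.cos θ * Real.sin φ) (Real.sin θ * Real.sin φ) (Real.cos φ) * Real.sin φ
      = (1/3) * (1 + (3 + Real.sqrt 3) / π) := by
  have hper : Function.Periodic (fun θ => ∫ φ in 0..π, tetraWidth θ φ ^ 2 * sin φ) (2 * (π / 3)) :=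
    fun θ => by simp only [mul_div_assoc', tetraWidth_add_two_pi_div_three]
  have heven : Function.Even (fun θ => ∫ φ in 0..π, tetraWidth θ φ ^ 2 * sin φ) :=
    fun θ => by simp only [tetraWidth_neg]
  simp_rw [gTetra_sphere_eq]
  rw [show 2 * π = 6 * (π / 3) by ring,
    integral_eq_six_mul_of_periodic_of_even (by fun_prop) hper heven,
    intervalIntegral.integral_congr fun θ hθ => integral_tetraWidth_sq_of_mem_sector
      (Set.uIcc_of_le (by positivity : (0 : ℝ) ≤ π / 3) ▸ hθ), integral_sector_eq]
  field_simp
  ring
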